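/- arXiv:math-ph/0105012 — 7 statements merged into one kernel-verified Lean document; each statement's English description precedes it below -/
import Mathlib

section
/- Let (η, ω, R) be a precosymplectic structure on a finite-dimensional real vector space V. For any subspace K ⊆ V, dim K^⊥ = dim V − dim K + dim(V^⊥ ∩ K), where V^⊥ = ker ω ∩ ker η. -/
variable {V : Type*} [AddCommGroup V] [Module ℝ V] [FiniteDimensional ℝ V]

/-- The `(ω,η)`-orthogonal complement of a subspace `K`:
`K^⊥ = {v : ω(v,u) − η(v)η(u) = 0 for all u ∈ K}`. -/
def perp (ω : V →ₗ[ℝ] V →ₗ[ℝ] ℝ) (η : V →ₗ[ℝ] ℝ) (K : Submodule ℝ V) :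
    Submodule ℝ V where
  carrier := {v | ∀ u ∈ K, ω v u = η v * η u}
  zero_mem' := by intro u hu; simp
  add_mem' := by
    intro a b ha hb u hu
    simp only [map_add, LinearMap.add_apply, ha u hu, hb u hu]
    ring
  smul_mem' := by
    intro c a ha u hu
    simp only [map_smul, LinearMap.smul_apply, smul_eq_mul, ha u hu]
    ring

/-- The map `♭_{(η,ω)} : V → V*`, `v ↦ i(v)ω + η(v)·η`. -/
noncomputable def flatMap (ω : V →ₗ[ℝ] V →ₗ[ℝ] ℝ) (η : V →ₗ[ℝ] ℝ) :
    V →ₗ[ℝ] (V →ₗ[ℝ] ℝ) :=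
  ω + η.smulRight η

/-- The wedge product of two linear forms: `(α∧β)(u,v) = α(u)β(v) − β(u)α(v)`. -/
noncomputable def wedge (α β : V →ₗ[ℝ] ℝ) : V →ₗ[ℝ] V →ₗ[ℝ] ℝ :=
  α.smulRight β - β.smulRight α

/-- For a precosymplectic structure `(η, ω, R)` and any subspace `K`,
`dim K^⊥ = dim V − dim K + dim(V^⊥ ∩ K)` where `V^⊥ = ker ω ∩ ker η`. -/
theorem stmt1 (ω : V →ₗ[ℝ] V →ₗ[ℝ] ℝ) (η : V →ₗ[ℝ] ℝ) (R : V)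
    (halt : ∀ v, ω v v = 0) (hRω : ω R = 0) (hRη : η R = 1)
    (K : Submodule ℝ V) :
    Module.finrank ℝ (perp ω η K) =
      Module.finrank ℝ V - Module.finrank ℝ K +
        Module.finrank ℝ ((LinearMap.ker ω ⊓ LinearMap.ker η) ⊓ K : Submodule ℝ V) := by
  classical
  have hskew : ∀ v u, ω v u = - ω u v := by
    intro v u
    have h := halt (v + u)
    simp only [map_add, LinearMap.add_apply, halt] at h
    linarith
  set Φ : V →ₗ[ℝ] Module.Dual ℝ V := ω - η.smulRight η with hΦ
  set f : V →ₗ[ℝ] Module.Dual ℝ K := K.dualRestrict ∘ₗ Φ with hf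
  have hfapp : ∀ v (u : K), f v u = ω v u - η v * η u := by
    intro v u; rfl
  -- perp = ker f
  have hperp : perp ω η K = LinearMap.ker f := by
    ext v
    constructor
    · intro hv
      simp only [LinearMap.mem_ker]
      ext u
      simp [hfapp, hv u u.2]
    · intro hv u hu
      have := congrArg (fun g => g ⟨u, hu⟩) (LinearMap.mem_ker.mp hv)
      simp [hfapp] at this
      linarith
  -- ker f.flip = V⊥ ∩ K (inside K)
  have hker : LinearMap.ker f.flip =
      Submodule.comap K.subtype ((LinearMap.ker ω ⊓ LinearMap.ker η) ⊓ K) := by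
    ext u
    simp only [LinearMap.mem_ker, Submodule.mem_comap, Submodule.mem_inf, LinearMap.mem_ker]
    constructor
    · intro h
      have h' : ∀ v, ω v (u : V) = η v * η (u : V) := by
        intro v
        have := congrArg (fun g => g v) h
        simp [LinearMap.flip_apply, hfapp] at this
        linarith
      have hηu : η (u : V) = 0 := by
        have := h' R
        rw [hRω, hRη] at this
        simpa using this.symm
      have hωu : ω (u : V) = 0 := by
        ext v
        rw [hskew, h' v, hηu]
        simp
      exact ⟨⟨hωu, hηu⟩, u.2⟩
    · intro ⟨⟨hωu, hηu⟩, _⟩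
      have hωu' : ω (u : V) = 0 := hωu
      have hηu' : η (u : V) = 0 := hηu
      ext v
      simp only [LinearMap.flip_apply, hfapp]
      rw [hskew v (u : V), hωu', hηu']
      simp
  have hdim2 : Module.finrank ℝ (LinearMap.ker f.flip) =
      Module.finrank ℝ ((LinearMap.ker ω ⊓ LinearMap.ker η) ⊓ K : Submodule ℝ V) := by
    rw [hker]
    exact (Submodule.comapSubtypeEquivOfLe inf_le_right).finrank_eq
  -- rank f = dim K - dim(V⊥∩K)
  have hrange : (LinearMap.ker f.flip).dualAnnihilator = LinearMap.range f := by
    have := LinearMap.dualAnnihilator_ker_eq_range_flip (B := f.flip)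
    rwa [LinearMap.flip_flip] at this
  have hrank : Module.finrank ℝ (LinearMap.range f) + Module.finrank ℝ (LinearMap.ker f.flip)
      = Module.finrank ℝ K := by
    rw [← hrange]
    have h1 : Module.finrank ℝ (↥K ⧸ LinearMap.ker f.flip) = Module.finrank ℝ (LinearMap.ker f.flip).dualAnnihilator := (Subspace.quotEquivAnnihilator _).finrank_eq
    have h2 := Submodule.finrank_quotient_add_finrank (LinearMap.ker f.flip)
    omega
  have hrn := LinearMap.finrank_range_add_finrank_ker f
  rw [hperp, hdim2.symm]
  have hKle : Module.finrank ℝ K ≤ Module.finrank ℝ V := Submodule.finrank_le K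
  omega
end

section
/- Let Ω be a 2-form on a finite-dimensional real vector space V, η ∈ V*, and let R, R' ∈ V satisfy η(R) = η(R') = 1. Define γ_R = i(R)Ω, ω_R = Ω − η∧γ_R, and similarly for R'. Then ker ω_R ∩ ker η = ker ω_{R'} ∩ ker η. -/
variable {V : Type*} [AddCommGroup V] [Module ℝ V] [FiniteDimensional ℝ V]

lemma stmt3_aux (Ω : V →ₗ[ℝ] V →ₗ[ℝ] ℝ) (η : V →ₗ[ℝ] ℝ)
    (halt : ∀ v, Ω v v = 0) (R R' : V) (hR : η R = 1) (hR' : η R' = 1) :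
    LinearMap.ker (Ω - wedge η (Ω R)) ⊓ LinearMap.ker η ≤
      LinearMap.ker (Ω - wedge η (Ω R')) ⊓ LinearMap.ker η := by
  intro v hv0
  rw [Submodule.mem_inf, LinearMap.mem_ker, LinearMap.mem_ker] at hv0
  obtain ⟨hv, hη⟩ := hv0
  rw [Submodule.mem_inf, LinearMap.mem_ker, LinearMap.mem_ker]
  have hskew : ∀ a b, Ω a b = -Ω b a := by
    intro a b
    have := halt (a + b)
    simp only [map_add, LinearMap.add_apply, halt] at this
    linarith
  have key : ∀ u, Ω v u = -(Ω R v * η u) := by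
    intro u
    have := congrFun (congrArg DFunLike.coe hv) u
    simp only [LinearMap.sub_apply, wedge, LinearMap.smulRight_apply, smul_eq_mul,
      LinearMap.zero_apply, LinearMap.smul_apply, hη] at this
    linarith
  have h1 : Ω R' v = Ω R v := by
    have := key R'
    rw [hskew v R'] at this
    rw [hR'] at this; linarith
  constructor
  · ext u
    simp only [LinearMap.sub_apply, wedge, LinearMap.smulRight_apply, smul_eq_mul,
      LinearMap.zero_apply, LinearMap.smul_apply, hη, key u, h1]
    ring
  · exact hη

/-- `ker ω_R ∩ ker η` does not depend on the choice of `R` with `η(R) = 1`,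
where `ω_R = Ω − η∧(i(R)Ω)`. -/
theorem stmt3 (Ω : V →ₗ[ℝ] V →ₗ[ℝ] ℝ) (η : V →ₗ[ℝ] ℝ)
    (halt : ∀ v, Ω v v = 0) (R R' : V) (hR : η R = 1) (hR' : η R' = 1) :
    LinearMap.ker (Ω - wedge η (Ω R)) ⊓ LinearMap.ker η =
      LinearMap.ker (Ω - wedge η (Ω R')) ⊓ LinearMap.ker η := by
  exact le_antisymm (stmt3_aux Ω η halt R R' hR hR') (stmt3_aux Ω η halt R' R hR' hR)
end

section
/- Let Ω be a 2-form on a finite-dimensional real vector space V, η ∈ V*, and R, R' ∈ V with η(R) = η(R') = 1. For any subspace K of V, the orthogonal complements of K with respect to (η, ω_R) and (η, ω_{R'}) have the same dimension, where ω_R = Ω − η∧(i(R)Ω). -/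
variable {V : Type*} [AddCommGroup V] [Module ℝ V] [FiniteDimensional ℝ V]

/-- Dimension formula for `perp`. -/
lemma finrank_perp_add (ω : V →ₗ[ℝ] V →ₗ[ℝ] ℝ) (η : V →ₗ[ℝ] ℝ) (K : Submodule ℝ V) :
    Module.finrank ℝ (perp ω η K) + Module.finrank ℝ K =
      Module.finrank ℝ V +
        Module.finrank ℝ (K ⊓ LinearMap.ker (ω - η.smulRight η).flip : Submodule ℝ V) := by
  set B : V →ₗ[ℝ] V →ₗ[ℝ] ℝ := ω - η.smulRight η with hB
  set f : V →ₗ[ℝ] Module.Dual ℝ K := (K.subtype.dualMap).comp B with hf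
  set g : K →ₗ[ℝ] Module.Dual ℝ V := B.flip.comp K.subtype with hg
  have hperp : perp ω η K = LinearMap.ker f := by
    ext v
    constructor
    · intro hv
      rw [LinearMap.mem_ker]
      ext u
      have := hv u u.2
      simp only [hf, LinearMap.comp_apply, LinearMap.dualMap_apply, hB,
        LinearMap.sub_apply, LinearMap.smulRight_apply, Submodule.subtype_apply,
        LinearMap.zero_apply, LinearMap.smul_apply, smul_eq_mul, this]
      ring
    · intro hv u hu
      have := LinearMap.congr_fun (LinearMap.mem_ker.mp hv) ⟨u, hu⟩
      simp only [hf, LinearMap.comp_apply, LinearMap.dualMap_apply, hB,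
        LinearMap.sub_apply, LinearMap.smulRight_apply, Submodule.subtype_apply,
        LinearMap.zero_apply, LinearMap.smul_apply, smul_eq_mul] at this
      linarith
  have hfg : f = g.dualMap.comp (Module.evalEquiv ℝ V).toLinearMap := by
    ext v u
    simp [hf, hg, Module.evalEquiv_toLinearMap]
  have hrange : Module.finrank ℝ (LinearMap.range f) =
      Module.finrank ℝ (LinearMap.range g) := by
    rw [hfg, LinearMap.range_comp, LinearEquiv.range, Submodule.map_top,
      LinearMap.finrank_range_dualMap_eq_finrank_range]
  have h1 := LinearMap.finrank_range_add_finrank_ker f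
  have h2 := LinearMap.finrank_range_add_finrank_ker g
  have hkg : Module.finrank ℝ (LinearMap.ker g) =
      Module.finrank ℝ (K ⊓ LinearMap.ker B.flip : Submodule ℝ V) := by
    rw [hg, LinearMap.ker_comp, ← Submodule.map_comap_subtype,
      Submodule.finrank_map_subtype_eq]
  rw [hperp]
  rw [hkg] at h2
  omega

lemma ker_flip_le (Ω : V →ₗ[ℝ] V →ₗ[ℝ] ℝ) (η : V →ₗ[ℝ] ℝ)
    (halt : ∀ v, Ω v v = 0) (R R' : V) (hR : η R = 1) (hR' : η R' = 1) :
    LinearMap.ker ((Ω - wedge η (Ω R)) - η.smulRight η).flip ≤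
      LinearMap.ker ((Ω - wedge η (Ω R')) - η.smulRight η).flip := by
  intro u hu
  have h : ∀ v, Ω v u - (η v * Ω R u - Ω R v * η u) - η v * η u = 0 := by
    intro v
    have := LinearMap.congr_fun (LinearMap.mem_ker.mp hu) v
    simpa [wedge, LinearMap.sub_apply, LinearMap.smulRight_apply, smul_eq_mul,
      mul_comm] using this
  have hηu : η u = 0 := by
    have := h u
    rw [halt u] at this
    nlinarith [sq_nonneg (η u)]
  have h' : ∀ v, Ω v u = η v * Ω R u := by
    intro v
    have := h v
    rw [hηu] at this
    linarith
  have hRR' : Ω R' u = Ω R u := by rw [h' R', hR', one_mul]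
  rw [LinearMap.mem_ker]
  ext v
  simp only [LinearMap.flip_apply, LinearMap.sub_apply, wedge,
    LinearMap.smulRight_apply, LinearMap.smul_apply, smul_eq_mul, LinearMap.zero_apply]
  rw [h' v, hηu, hRR']
  ring

/-- The dimension of the `(η, ω_R)`-orthogonal complement of a subspace `K`
does not depend on the choice of `R` with `η(R) = 1`, where `ω_R = Ω − η∧(i(R)Ω)`. -/
theorem stmt4 (Ω : V →ₗ[ℝ] V →ₗ[ℝ] ℝ) (η : V →ₗ[ℝ] ℝ)
    (halt : ∀ v, Ω v v = 0) (R R' : V) (hR : η R = 1) (hR' : η R' = 1)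
    (K : Submodule ℝ V) :
    Module.finrank ℝ (perp (Ω - wedge η (Ω R)) η K) =
      Module.finrank ℝ (perp (Ω - wedge η (Ω R')) η K) := by
  have hker : LinearMap.ker ((Ω - wedge η (Ω R)) - η.smulRight η).flip =
      LinearMap.ker ((Ω - wedge η (Ω R')) - η.smulRight η).flip :=
    le_antisymm (ker_flip_le Ω η halt R R' hR hR')
      (ker_flip_le Ω η halt R' R hR' hR)
  have h1 := finrank_perp_add (Ω - wedge η (Ω R)) η K
  have h2 := finrank_perp_add (Ω - wedge η (Ω R')) η K
  rw [hker] at h1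
  omega
end

section
/- Let (η, ω) be a cosymplectic structure on a finite-dimensional real vector space V. Suppose K is a subspace with K ∩ K^⊥ = {0} and there exists R_K ∈ K with i(R_K)ω|_K = 0 and η(R_K) = 1. Then the restricted pair (η_K, ω_K) is a cosymplectic structure on K, i.e. the map ♭_{(η_K,ω_K)} : K → K*, u ↦ i(u)ω_K + η_K(u)η_K, is a linear isomorphism, and moreover ker ω_K = span{R_K} (so dim K is odd). -/
/-!
Evaluating `♭ u = 0` at `R` gives `η u = -ω u R = ω R u = 0` and then `i(u)ω = 0`, so the kernel
of `♭_{(η,ω)}` is `ker ω ∩ ker η`. For the restriction to `K` this intersection lies in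
`K ∩ K^⊥ = 0`, so `♭_K` is injective, hence bijective. Every `u ∈ ker ω_K` is `η(u) R_K` plus an
element of `ker ω_K ∩ ker η_K = 0`, and `ω_K` restricts to a nondegenerate alternating form on the
hyperplane `ker η_K`, which therefore has even dimension.
-/

variable {V : Type*} [AddCommGroup V] [Module ℝ V] [FiniteDimensional ℝ V]

open Module

theorem Matrix.det_eq_zero_of_transpose_eq_neg {n R : Type*} [Fintype n] [DecidableEq n]
    [CommRing R] [IsAddTorsionFree R] {A : Matrix n n R} (hA : A.transpose = -A)
    (hn : Odd (Fintype.card n)) : A.det = 0 := by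
  have h : A.det = -A.det := calc
    A.det = A.transpose.det := A.det_transpose.symm
    _ = -A.det := by rw [hA, Matrix.det_neg, hn.neg_one_pow, neg_one_mul]
  exact self_eq_neg.mp h

theorem LinearMap.IsAlt.compl₁₂ {R M N P : Type*} [CommSemiring R] [AddCommMonoid M]
    [AddCommMonoid N] [AddCommMonoid P] [Module R M] [Module R N] [Module R P]
    {B : M →ₗ[R] M →ₗ[R] P} (hB : B.IsAlt) (f : N →ₗ[R] M) : (B.compl₁₂ f f).IsAlt :=
  fun x => hB (f x)

theorem LinearMap.IsAlt.even_finrank_of_separatingLeft {𝕜 W : Type*} [Field 𝕜] [CharZero 𝕜]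
    [AddCommGroup W] [Module 𝕜 W] [FiniteDimensional 𝕜 W] {B : W →ₗ[𝕜] W →ₗ[𝕜] 𝕜}
    (hB : B.IsAlt) (hsep : B.SeparatingLeft) : Even (finrank 𝕜 W) := by
  let b := finBasis 𝕜 W
  have hskew : (LinearMap.toMatrix₂ b b B).transpose = -LinearMap.toMatrix₂ b b B := by
    ext i j
    simp only [Matrix.transpose_apply, Matrix.neg_apply, LinearMap.toMatrix₂_apply]
    exact (hB.neg _ _).symm
  by_contra hodd
  refine (LinearMap.separatingLeft_iff_det_ne_zero b).mp hsep
    (Matrix.det_eq_zero_of_transpose_eq_neg hskew ?_)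
  rwa [Fintype.card_fin, ← Nat.not_even_iff_odd]

section Reeb

variable {W : Type*} [AddCommGroup W] [Module ℝ W]

theorem flatMap_apply (ω : W →ₗ[ℝ] W →ₗ[ℝ] ℝ) (η : W →ₗ[ℝ] ℝ) (u w : W) :
    flatMap ω η u w = ω u w + η u * η w := by
  simp [flatMap]

variable {ω : W →ₗ[ℝ] W →ₗ[ℝ] ℝ} {η : W →ₗ[ℝ] ℝ} {R : W}

theorem ker_flatMap_eq_ker_inf_ker (hω : ω.IsAlt) (hR : ω R = 0) (hηR : η R = 1) :
    LinearMap.ker (flatMap ω η) = LinearMap.ker ω ⊓ LinearMap.ker η := by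
  ext u
  simp only [Submodule.mem_inf, LinearMap.mem_ker]
  constructor
  · intro hu
    have hωuR : ω u R = 0 := by rw [← hω.neg, hR, LinearMap.zero_apply, neg_zero]
    have hηu : η u = 0 := by
      simpa [flatMap_apply, hωuR, hηR] using LinearMap.congr_fun hu R
    refine ⟨?_, hηu⟩
    ext w
    simpa [flatMap_apply, hηu] using LinearMap.congr_fun hu w
  · rintro ⟨hωu, hηu⟩
    ext w
    simp [flatMap_apply, hωu, hηu]

theorem ker_eq_span_singleton_of_injective_flatMap (hω : ω.IsAlt) (hR : ω R = 0)
    (hηR : η R = 1) (hinj : Function.Injective (flatMap ω η)) :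
    LinearMap.ker ω = Submodule.span ℝ {R} := by
  refine le_antisymm (fun u hu => ?_) ?_
  · have hdiff : u - η u • R ∈ LinearMap.ker ω ⊓ LinearMap.ker η := by
      rw [LinearMap.mem_ker] at hu
      simp [hu, hR, hηR]
    rw [← ker_flatMap_eq_ker_inf_ker hω hR hηR, LinearMap.ker_eq_bot.mpr hinj,
      Submodule.mem_bot, sub_eq_zero] at hdiff
    rw [hdiff]
    exact Submodule.smul_mem _ _ (Submodule.mem_span_singleton_self R)
  · rw [Submodule.span_singleton_le_iff_mem]
    exact hR

theorem separatingLeft_restrict_ker_of_injective_flatMap (hω : ω.IsAlt) (hR : ω R = 0)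
    (hηR : η R = 1) (hinj : Function.Injective (flatMap ω η)) :
    (ω.compl₁₂ (LinearMap.ker η).subtype (LinearMap.ker η).subtype).SeparatingLeft := by
  rintro ⟨u, hηu⟩ hu
  have hωuR : ω u R = 0 := by rw [← hω.neg, hR, LinearMap.zero_apply, neg_zero]
  have hωu : ω u = 0 := by
    ext w
    have hw : w - η w • R ∈ LinearMap.ker η := by simp [hηR]
    simpa [hωuR] using hu ⟨_, hw⟩
  have : u ∈ LinearMap.ker (flatMap ω η) := by
    rw [ker_flatMap_eq_ker_inf_ker hω hR hηR]
    exact ⟨hωu, hηu⟩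
  rw [LinearMap.ker_eq_bot.mpr hinj, Submodule.mem_bot] at this
  exact Subtype.ext this

variable [FiniteDimensional ℝ W]

theorem odd_finrank_of_injective_flatMap (hω : ω.IsAlt) (hR : ω R = 0)
    (hηR : η R = 1) (hinj : Function.Injective (flatMap ω η)) : Odd (finrank ℝ W) := by
  have hη : η ≠ 0 := fun h => by simp [h] at hηR
  rw [← Dual.finrank_ker_add_one_of_ne_zero hη]
  exact ((hω.compl₁₂ _).even_finrank_of_separatingLeft
    (separatingLeft_restrict_ker_of_injective_flatMap hω hR hηR hinj)).add_one

theorem bijective_flatMap_of_injective (hinj : Function.Injective (flatMap ω η)) :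
    Function.Bijective (flatMap ω η) :=
  ⟨hinj, (LinearMap.injective_iff_surjective_of_finrank_eq_finrank
    Subspace.dual_finrank_eq.symm).mp hinj⟩

end Reeb

theorem injective_flatMap_restrict {W : Type*} [AddCommGroup W] [Module ℝ W]
    {ω : W →ₗ[ℝ] W →ₗ[ℝ] ℝ} {η : W →ₗ[ℝ] ℝ} (hω : ω.IsAlt) {K : Submodule ℝ W}
    (hdisj : K ⊓ perp ω η K = ⊥) {RK : W} (hRK : RK ∈ K) (hRKω : ∀ u ∈ K, ω RK u = 0)
    (hRKη : η RK = 1) :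
    Function.Injective (flatMap (ω.compl₁₂ K.subtype K.subtype) (η.comp K.subtype)) := by
  rw [← LinearMap.ker_eq_bot, ker_flatMap_eq_ker_inf_ker (R := (⟨RK, hRK⟩ : K))
    (hω.compl₁₂ K.subtype) (LinearMap.ext fun w => hRKω w w.2) hRKη, eq_bot_iff]
  intro u hu
  obtain ⟨hωu, hηu⟩ := Submodule.mem_inf.mp hu
  have hperp : u.1 ∈ K ⊓ perp ω η K := by
    refine ⟨u.2, fun w hw => ?_⟩
    have hηu' : η u = 0 := hηu
    simpa [hηu'] using LinearMap.congr_fun hωu ⟨w, hw⟩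
  rw [hdisj, Submodule.mem_bot] at hperp
  exact Subtype.ext hperp

theorem stmt9_general (ω : V →ₗ[ℝ] V →ₗ[ℝ] ℝ) (η : V →ₗ[ℝ] ℝ) (halt : ∀ v, ω v v = 0)
    (K : Submodule ℝ V)
    (hdisj : K ⊓ perp ω η K = ⊥)
    (RK : V) (hRK : RK ∈ K) (hRKω : ∀ u ∈ K, ω RK u = 0) (hRKη : η RK = 1) :
    Function.Bijective (flatMap (ω.compl₁₂ K.subtype K.subtype) (η.comp K.subtype)) ∧
    LinearMap.ker (ω.compl₁₂ K.subtype K.subtype) =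
      Submodule.span ℝ {(⟨RK, hRK⟩ : K)} ∧
    Odd (Module.finrank ℝ K) := by
  have hωK : (ω.compl₁₂ K.subtype K.subtype).IsAlt := LinearMap.IsAlt.compl₁₂ halt _
  have hR : ω.compl₁₂ K.subtype K.subtype ⟨RK, hRK⟩ = 0 := LinearMap.ext fun w => hRKω w w.2
  have hinj := injective_flatMap_restrict halt hdisj hRK hRKω hRKη
  exact ⟨bijective_flatMap_of_injective hinj,
    ker_eq_span_singleton_of_injective_flatMap hωK hR hRKη hinj,
    odd_finrank_of_injective_flatMap hωK hR hRKη hinj⟩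

/-- If `K ∩ K^⊥ = {0}` and there is `R_K ∈ K` with `i(R_K)ω|_K = 0`, `η(R_K) = 1`,
then `(η_K, ω_K)` is cosymplectic on `K`, `ker ω_K = span{R_K}`, and `dim K` is odd. -/
theorem stmt9 (ω : V →ₗ[ℝ] V →ₗ[ℝ] ℝ) (η : V →ₗ[ℝ] ℝ) (halt : ∀ v, ω v v = 0)
    (hbij : Function.Bijective (flatMap ω η)) (K : Submodule ℝ V)
    (hdisj : K ⊓ perp ω η K = ⊥)
    (RK : V) (hRK : RK ∈ K) (hRKω : ∀ u ∈ K, ω RK u = 0) (hRKη : η RK = 1) :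
    Function.Bijective (flatMap (ω.compl₁₂ K.subtype K.subtype) (η.comp K.subtype)) ∧
    LinearMap.ker (ω.compl₁₂ K.subtype K.subtype) =
      Submodule.span ℝ {(⟨RK, hRK⟩ : K)} ∧
    Odd (Module.finrank ℝ K) :=
  stmt9_general ω η halt K hdisj RK hRK hRKω hRKη
end

section
/- Let (η, ω) be a cosymplectic structure on a finite-dimensional real vector space V with Reeb vector R. Let α ∈ V* and define ω̃ = ω + α∧η. Then (η, ω̃) is again a cosymplectic structure on V, and its Reeb vector is R̃ = E_α := ♭_{(η,ω)}^{-1}(α + (1 − α(R))η). -/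
variable {V : Type*} [AddCommGroup V] [Module ℝ V] [FiniteDimensional ℝ V]

/-- If `(η, ω)` is cosymplectic with Reeb vector `R` and `ω̃ = ω + α∧η`, then
`(η, ω̃)` is cosymplectic with Reeb vector `E_α = ♭⁻¹(α + (1 − α(R))η)`. -/
theorem stmt14 (ω : V →ₗ[ℝ] V →ₗ[ℝ] ℝ) (η : V →ₗ[ℝ] ℝ) (halt : ∀ v, ω v v = 0)
    (hbij : Function.Bijective (flatMap ω η))
    (R : V) (hRω : ω R = 0) (hRη : η R = 1)
    (α : V →ₗ[ℝ] ℝ) (Eα : V)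
    (hE : flatMap ω η Eα = α + (1 - α R) • η) :
    Function.Bijective (flatMap (ω + wedge α η) η) ∧
    (ω + wedge α η) Eα = 0 ∧ η Eα = 1 := by
  have hanti : ∀ u v, ω u v = - ω v u := by
    intro u v
    have h := halt (u + v)
    simp only [map_add, LinearMap.add_apply, halt u, halt v] at h
    linarith
  have hER : ω Eα R = 0 := by
    rw [hanti]
    simp [hRω]
  have hE1 := congrArg (fun f => f R) hE
  simp only [flatMap, wedge, LinearMap.add_apply, LinearMap.smulRight_apply,
    LinearMap.smul_apply, smul_eq_mul, hRη, hER] at hE1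
  have hηE : η Eα = 1 := by linarith
  have hE2 := congrArg (fun f => f Eα) hE
  simp only [flatMap, LinearMap.add_apply, LinearMap.smulRight_apply,
    LinearMap.smul_apply, smul_eq_mul, halt Eα, hηE] at hE2
  have hαE : α Eα = α R := by linarith
  have hEv : ∀ v, ω Eα v = α v - α R * η v := by
    intro v
    have h := congrArg (fun f => f v) hE
    simp only [flatMap, LinearMap.add_apply, LinearMap.smulRight_apply,
      LinearMap.smul_apply, smul_eq_mul, hηE] at h
    linarith
  have hmain : (ω + wedge α η) Eα = 0 := by
    ext v
    simp only [wedge, LinearMap.add_apply, LinearMap.sub_apply,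
      LinearMap.smulRight_apply, smul_eq_mul, hEv v, hηE, hαE, LinearMap.zero_apply,
      LinearMap.smul_apply]
    ring
  refine ⟨?_, hmain, hηE⟩
  have hinj : Function.Injective ⇑(flatMap (ω + wedge α η) η) := ?_
  · exact ⟨hinj, (LinearMap.injective_iff_surjective_of_finrank_eq_finrank Subspace.dual_finrank_eq.symm).mp hinj⟩
  intro v w hvw
  have key : ∀ x, flatMap (ω + wedge α η) η x = 0 → x = 0 := by
    intro x hx
    have hxR := congrArg (fun f => f R) hx
    simp only [flatMap, wedge, LinearMap.add_apply, LinearMap.sub_apply,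
      LinearMap.smulRight_apply, LinearMap.smul_apply, smul_eq_mul, hRη,
      LinearMap.zero_apply] at hxR
    have hxRω : ω x R = 0 := by rw [hanti]; simp [hRω]
    rw [hxRω] at hxR
    -- hxR : 0 + (α x * 1 - η x * α R) + η x * 1 = 0
    have hαx : α x = η x * (α R - 1) := by linarith
    have hflat : flatMap ω η x = flatMap ω η ((η x) • Eα) := by
      ext u
      have hxu := congrArg (fun f => f u) hx
      simp only [flatMap, wedge, LinearMap.add_apply, LinearMap.sub_apply,
        LinearMap.smulRight_apply, LinearMap.smul_apply, smul_eq_mul,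
        LinearMap.zero_apply, map_smul] at hxu ⊢
      rw [hαx] at hxu
      rw [hEv u, hηE]
      linear_combination hxu
    have hx' : x = (η x) • Eα := hbij.1 hflat
    have hFER : flatMap (ω + wedge α η) η Eα R = 1 := by
      simp only [flatMap, wedge, LinearMap.add_apply, LinearMap.sub_apply,
        LinearMap.smulRight_apply, smul_eq_mul, hER, hRη, hηE, hαE,
        LinearMap.smul_apply, one_smul]
      ring
    have hηx : η x = 0 := by
      have h := congrArg (fun f => f R) hx
      rw [hx', map_smul] at h
      simp only [LinearMap.smul_apply, smul_eq_mul, hFER, LinearMap.zero_apply] at h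
      simpa using h
    rw [hx', hηx, zero_smul]
  have := key (v - w) (by rw [map_sub, hvw, sub_self])
  exact sub_eq_zero.mp this
end

section
/- Let (η, ω) be a cosymplectic structure on a finite-dimensional real vector space V with Reeb vector R, let α ∈ V*, and set ω̃ = ω + α∧η. For any β ∈ V*, define X_β = ♭_{(η,ω)}^{-1}(β − β(R)η) and X̃_β = ♭_{(η,ω̃)}^{-1}(β − β(R̃)η), where R̃ is the Reeb vector of (η, ω̃). Then X_β = X̃_β. -/
variable {V : Type*} [AddCommGroup V] [Module ℝ V] [FiniteDimensional ℝ V]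

/-- The Hamiltonian vectors of `β` with respect to `(η, ω)` and `(η, ω̃)` coincide,
where `ω̃ = ω + α∧η`. -/
theorem stmt15 (ω : V →ₗ[ℝ] V →ₗ[ℝ] ℝ) (η : V →ₗ[ℝ] ℝ) (halt : ∀ v, ω v v = 0)
    (hbij : Function.Bijective (flatMap ω η))
    (R : V) (hRω : ω R = 0) (hRη : η R = 1)
    (α : V →ₗ[ℝ] ℝ)
    (hbij' : Function.Bijective (flatMap (ω + wedge α η) η))
    (R' : V) (hR'ω : (ω + wedge α η) R' = 0) (hR'η : η R' = 1)
    (β : V →ₗ[ℝ] ℝ) (Xβ X'β : V)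
    (hXβ : flatMap ω η Xβ = β - β R • η ∧ η Xβ = 0)
    (hX'β : flatMap (ω + wedge α η) η X'β = β - β R' • η ∧ η X'β = 0) :
    Xβ = X'β := by
  obtain ⟨h1, h2⟩ := hXβ
  obtain ⟨h1', h2'⟩ := hX'β
  have hanti : ∀ u v, ω u v = - ω v u := by
    intro u v
    have := halt (u + v)
    simp only [map_add, LinearMap.add_apply, halt u, halt v] at this
    linarith
  -- flat ω η X'β = β - (β R' + α X'β) • η
  have key : flatMap ω η X'β = β - (β R' + α X'β) • η := by
    ext u
    have := congrFun (congrArg DFunLike.coe h1') u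
    simp only [flatMap, wedge, LinearMap.add_apply, LinearMap.sub_apply,
      LinearMap.smulRight_apply, LinearMap.smul_apply, smul_eq_mul, h2'] at this ⊢
    linarith
  -- evaluate at R : ω X'β R = -ω R X'β = 0
  have hval : β R' + α X'β = β R := by
    have := congrFun (congrArg DFunLike.coe key) R
    simp only [flatMap, LinearMap.add_apply, LinearMap.smulRight_apply,
      LinearMap.sub_apply, LinearMap.smul_apply, smul_eq_mul, h2', hRη] at this
    have hz : ω X'β R = 0 := by
      rw [hanti]
      simp [hRω]
    rw [hz] at this
    linarith
  rw [hval] at key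
  exact hbij.injective (h1.trans key.symm)
end

section
/- Let (η, ω) be a cosymplectic structure on a finite-dimensional real vector space V, α ∈ V*, and ω̃ = ω + α∧η. Then the Poisson bivectors coincide: Λ(β,γ) = Λ̃(β,γ) for all β, γ ∈ V*, where Λ(β,γ) = ω(X_β, X_γ) and Λ̃(β,γ) = ω̃(X̃_β, X̃_γ). -/
variable {V : Type*} [AddCommGroup V] [Module ℝ V] [FiniteDimensional ℝ V]

/-- The Poisson bivectors of `(η, ω)` and `(η, ω̃)` coincide, where `ω̃ = ω + α∧η`:
`ω(X_β, X_γ) = ω̃(X̃_β, X̃_γ)` for all `β, γ ∈ V*`. -/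
theorem stmt16 (ω : V →ₗ[ℝ] V →ₗ[ℝ] ℝ) (η : V →ₗ[ℝ] ℝ) (halt : ∀ v, ω v v = 0)
    (hbij : Function.Bijective (flatMap ω η))
    (R : V) (hRω : ω R = 0) (hRη : η R = 1)
    (α : V →ₗ[ℝ] ℝ)
    (hbij' : Function.Bijective (flatMap (ω + wedge α η) η))
    (R' : V) (hR'ω : (ω + wedge α η) R' = 0) (hR'η : η R' = 1)
    (X X' : (V →ₗ[ℝ] ℝ) → V)
    (hX : ∀ β, flatMap ω η (X β) = β - β R • η)
    (hX' : ∀ β, flatMap (ω + wedge α η) η (X' β) = β - β R' • η) :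
    ∀ β γ : V →ₗ[ℝ] ℝ, ω (X β) (X γ) = (ω + wedge α η) (X' β) (X' γ) := by

  -- pointwise formulas
  have hflat : ∀ v u : V, flatMap ω η v u = ω v u + η v * η u := by
    intro v u; simp [flatMap]
  have hflat' : ∀ v u : V, flatMap (ω + wedge α η) η v u
      = ω v u + (α v * η u - η v * α u) + η v * η u := by
    intro v u
    simp only [flatMap, wedge, LinearMap.add_apply, LinearMap.sub_apply,
      LinearMap.smulRight_apply, LinearMap.smul_apply, smul_eq_mul]
  have skew : ∀ u v, ω u v = -ω v u := by
    intro u v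
    have h := halt (u + v)
    simp only [map_add, LinearMap.add_apply] at h
    have h1 := halt u; have h2 := halt v
    linarith
  have hηX : ∀ β, η (X β) = 0 := by
    intro β
    have h := congrArg (fun f : V →ₗ[ℝ] ℝ => f R) (hX β)
    simp only [hflat, LinearMap.sub_apply, LinearMap.smul_apply, smul_eq_mul, hRη] at h
    have hz : ω (X β) R = 0 := by simp [skew (X β) R, hRω]
    rw [hz] at h; linarith
  have hηX' : ∀ β, η (X' β) = 0 := by
    intro β
    have h := congrArg (fun f : V →ₗ[ℝ] ℝ => f R') (hX' β)
    simp only [hflat', LinearMap.sub_apply, LinearMap.smul_apply, smul_eq_mul, hR'η] at h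
    have hz : ω (X' β) R' + (α (X' β) * 1 - η (X' β) * α R') = 0 := by
      have h0 := congrArg (fun f : V →ₗ[ℝ] ℝ => f (X' β)) hR'ω
      simp only [LinearMap.add_apply, LinearMap.zero_apply, wedge,
        LinearMap.sub_apply, LinearMap.smulRight_apply, LinearMap.smul_apply,
        smul_eq_mul, hR'η] at h0
      have hsk := skew (X' β) R'
      linarith
    nlinarith [hz, h]
  -- the constant: β R' + α (X' β) = β R
  have hconst : ∀ β : V →ₗ[ℝ] ℝ, β R' + α (X' β) = β R := by
    intro β
    have h := congrArg (fun f : V →ₗ[ℝ] ℝ => f R) (hX' β)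
    simp only [hflat', LinearMap.sub_apply, LinearMap.smul_apply, smul_eq_mul, hRη,
      hηX' β] at h
    have hz : ω (X' β) R = 0 := by simp [skew (X' β) R, hRω]
    rw [hz] at h; linarith
  have heq : ∀ β, X' β = X β := by
    intro β
    apply hbij.injective
    apply LinearMap.ext
    intro u
    have h := congrArg (fun f : V →ₗ[ℝ] ℝ => f u) (hX' β)
    simp only [hflat', LinearMap.sub_apply, LinearMap.smul_apply, smul_eq_mul,
      hηX' β] at h
    have h2 := congrArg (fun f : V →ₗ[ℝ] ℝ => f u) (hX β)
    simp only [hflat, hηX β, LinearMap.sub_apply, LinearMap.smul_apply, smul_eq_mul] at h2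
    rw [hflat, hflat, hηX β, hηX' β]
    have hc := hconst β
    have hd : β R' * η u + α (X' β) * η u = β R * η u := by rw [← add_mul, hc]
    linarith [h, h2, hd]
  intro β γ
  rw [heq, heq]
  simp only [LinearMap.add_apply, wedge, LinearMap.sub_apply, LinearMap.smulRight_apply,
    LinearMap.smul_apply, smul_eq_mul, hηX β, hηX γ]
  ring
end
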